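/- arXiv:2107.02550 — 2 statements merged into one kernel-verified Lean document; each statement's English description precedes it below -/
import Mathlib

section
/- Let (W, b, t, h) be a radial neural network with shifts, with L layers, widths vector n = (n₀, …, n_L), shifts t = (t₁, …, t_L) ∈ ℝ^L, and activations ρ_i = h_i^{(n_i, t_i)}. Let n^red be the reduced widths vector of n. Then there exist weights W^red_i ∈ ℝ^{n^red_i × n^red_{i−1}} and biases b^red_i ∈ ℝ^{n^red_i} (i = 1, …, L) such that the feedforward function of the compressed network (W^red, b^red, t, h), with the same shifts t and activations h_i^{(n^red_i, t_i)}, equals the feedforward function of (W, b, t, h). -/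
open scoped Classical
open Metric Set

noncomputable section

abbrev Euc (n : ℕ) := EuclideanSpace ℝ (Fin n)

def mulVecE {m n : ℕ} (W : Matrix (Fin m) (Fin n) ℝ) (v : Euc n) : Euc m :=
  WithLp.toLp 2 (fun j => ∑ k, W j k * v k)

/-- The radial rescaling function h⁽ᵏ⁾ : ℝᵏ → ℝᵏ associated to h : ℝ → ℝ,
v ↦ (h ‖v‖ / ‖v‖) • v for v ≠ 0, and 0 ↦ 0. -/
def radialRescale {n : ℕ} (h : ℝ → ℝ) (v : Euc n) : Euc n :=
  if v = 0 then 0 else (h ‖v‖ / ‖v‖) • v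

/-- The partial feedforward functions of a fully connected network with widths
width 0, width 1, …: F₀ = id and F_{i+1}(x) = ρᵢ(Wᵢ Fᵢ(x) + bᵢ).
(Activation ρ i, weights W i and biases b i belong to layer i+1.) -/
def feedforward (width : ℕ → ℕ)
    (W : ∀ i : ℕ, Matrix (Fin (width (i+1))) (Fin (width i)) ℝ)
    (b : ∀ i : ℕ, Euc (width (i+1)))
    (ρ : ∀ i : ℕ, Euc (width (i+1)) → Euc (width (i+1))) :
    (i : ℕ) → Euc (width 0) → Euc (width i)
  | 0 => fun x => x
  | (i+1) => fun x => ρ i (mulVecE (W i) (feedforward width W b ρ i x) + b i)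

/-- The reduced widths vector: nʳᵉᵈ₀ = n₀, nʳᵉᵈᵢ = min(nᵢ, nʳᵉᵈ_{i−1} + 1) for
0 < i < L, and nʳᵉᵈ_L = n_L. -/
def reducedWidth (width : ℕ → ℕ) (L : ℕ) : ℕ → ℕ
  | 0 => width 0
  | (i+1) => if i + 1 < L then min (width (i+1)) (reducedWidth width L i + 1) else width (i+1)

lemma reducedWidth_le (width : ℕ → ℕ) (L : ℕ) (i : ℕ) :
    reducedWidth width L i ≤ width i := by
  cases i with
  | zero => simp [reducedWidth]
  | succ i =>
    rw [reducedWidth]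
    split
    · exact min_le_left _ _
    · exact le_rfl

/-- The standard inclusion ℝᵏ ↪ ℝˡ into the first k coordinates. -/
def incl (k l : ℕ) (v : Euc k) : Euc l :=
  WithLp.toLp 2 (fun j => if h : (j : ℕ) < k then v ⟨j, h⟩ else 0)

/-- The shifted radial rescaling function h^{(k,t)} : ℝᵏ → ℝᵏ,
v ↦ (h (‖v‖ − t) / ‖v‖) • v for v ≠ 0, and 0 ↦ 0. -/
def shiftedRadialRescale {n : ℕ} (h : ℝ → ℝ) (t : ℝ) (v : Euc n) : Euc n :=
  if v = 0 then 0 else (h (‖v‖ - t) / ‖v‖) • v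

/-
If the previous layer of the network has been compressed to width p, the affine map
v ↦ Wᵢ v + bᵢ of layer i has image in the subspace range Wᵢ ⊔ ℝ bᵢ, of dimension at most
p + 1, hence inside the image of a linear isometry ℝ^{nʳᵉᵈᵢ} → ℝ^{nᵢ}; so the layer factors as
that isometry after an affine map of ℝ^p into ℝ^{nʳᵉᵈᵢ}. Shifted radial rescalings depend only on
norms and directions, so they commute with linear isometries, and the isometries can be pushed
through the network one layer at a time. In the last layer nʳᵉᵈ_L = n_L and the isometry is the
identity.
-/

lemma mulVecE_eq_toEuclideanLin {m n : ℕ} (W : Matrix (Fin m) (Fin n) ℝ) (v : Euc n) :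
    mulVecE W v = Matrix.toEuclideanLin W v := by
  ext j
  simp [mulVecE, Matrix.mulVec, dotProduct]

lemma shiftedRadialRescale_linearIsometry {k m : ℕ} (J : Euc k →ₗᵢ[ℝ] Euc m)
    (h : ℝ → ℝ) (t : ℝ) (v : Euc k) :
    shiftedRadialRescale h t (J v) = J (shiftedRadialRescale h t v) := by
  by_cases hv : v = 0
  · simp [shiftedRadialRescale, hv]
  · have hJv : J v ≠ 0 := fun h0 => hv (J.injective (by rw [h0, map_zero]))
    simp [shiftedRadialRescale, hv, hJv, J.norm_map]

lemma exists_eq_comp_add_of_le_range {R M N P : Type*} [Ring R] [AddCommGroup M] [Module R M]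
    [AddCommGroup N] [Module R N] [AddCommGroup P] [Module R P]
    {J : N →ₗ[R] P} (hJ : Function.Injective J) {A : M →ₗ[R] P} {c : P}
    (hA : LinearMap.range A ≤ LinearMap.range J) (hc : c ∈ LinearMap.range J) :
    ∃ (B : M →ₗ[R] N) (d : N), ∀ v, A v + c = J (B v + d) := by
  let e := LinearEquiv.ofInjective J hJ
  have hJe : ∀ w, J (e.symm w) = w := LinearEquiv.ofInjective_symm_apply J
  refine ⟨e.symm.toLinearMap ∘ₗ A.codRestrict _ fun v => hA (LinearMap.mem_range_self A v),
    e.symm ⟨c, hc⟩, fun v => ?_⟩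
  rw [LinearMap.comp_apply, LinearEquiv.coe_coe, ← map_add, hJe]
  rfl

lemma Submodule.exists_le_finrank_eq {K V : Type*} [DivisionRing K] [AddCommGroup V] [Module K V]
    [Module.Finite K V] (S : Submodule K V) {k : ℕ} (hSk : Module.finrank K S ≤ k)
    (hk : k ≤ Module.finrank K V) : ∃ T : Submodule K V, S ≤ T ∧ Module.finrank K T = k := by
  induction k with
  | zero => exact ⟨S, le_rfl, by omega⟩
  | succ k ih =>
    rcases hSk.eq_or_lt with hS | hS
    · exact ⟨S, le_rfl, hS⟩
    obtain ⟨T, hST, hT⟩ := ih (by omega) (by omega)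
    obtain ⟨v, hv⟩ : ∃ v, v ∉ T := by
      by_contra! hall
      have : T = ⊤ := eq_top_iff.2 fun v _ => hall v
      rw [this, finrank_top] at hT
      omega
    exact ⟨T ⊔ span K {v}, hST.trans le_sup_left, by rw [finrank_sup_span_singleton hv, hT]⟩

lemma exists_linearIsometry_le_range {E : Type*} [NormedAddCommGroup E] [InnerProductSpace ℝ E]
    [FiniteDimensional ℝ E] (S : Submodule ℝ E) {k : ℕ} (hSk : Module.finrank ℝ S ≤ k)
    (hk : k ≤ Module.finrank ℝ E) : ∃ J : Euc k →ₗᵢ[ℝ] E, S ≤ LinearMap.range J.toLinearMap := by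
  obtain ⟨T, hST, hT⟩ := S.exists_le_finrank_eq hSk hk
  let e : Euc k ≃ₗᵢ[ℝ] T := ((stdOrthonormalBasis ℝ T).reindex (finCongr hT)).repr.symm
  refine ⟨T.subtypeₗᵢ.comp e.toLinearIsometry, fun s hs => ⟨e.symm ⟨s, hST hs⟩, ?_⟩⟩
  simp

lemma finrank_range_sup_span_singleton_le {K M V : Type*} [DivisionRing K] [AddCommGroup M]
    [Module K M] [Module.Finite K M] [AddCommGroup V] [Module K V] (A : M →ₗ[K] V) (c : V) :
    Module.finrank K ↥(LinearMap.range A ⊔ K ∙ c) ≤ Module.finrank K M + 1 := by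
  refine (Submodule.finrank_add_le_finrank_add_finrank _ _).trans (add_le_add A.finrank_range_le ?_)
  simpa using finrank_span_le_card ({c} : Set V)

lemma incl_self (k : ℕ) (v : Euc k) : incl k k v = v := by
  ext j
  simp [incl]

lemma exists_linearIsometryEquiv_eq_incl {k m : ℕ} (h : k = m) :
    ∃ J : Euc k ≃ₗᵢ[ℝ] Euc m, ∀ v, J v = incl k m v := by
  subst h
  exact ⟨LinearIsometryEquiv.refl ℝ _, fun v => (incl_self k v).symm⟩

lemma exists_linearIsometry_reducedWidth (width : ℕ → ℕ) (L i : ℕ)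
    (S : Submodule ℝ (Euc (width (i+1)))) (hS : Module.finrank ℝ S ≤ reducedWidth width L i + 1) :
    ∃ J : Euc (reducedWidth width L (i+1)) →ₗᵢ[ℝ] Euc (width (i+1)),
      S ≤ LinearMap.range J.toLinearMap ∧
        (L ≤ i + 1 → ∀ v, J v = incl (reducedWidth width L (i+1)) (width (i+1)) v) := by
  by_cases hi : i + 1 < L
  · have hred : reducedWidth width L (i+1) = min (width (i+1)) (reducedWidth width L i + 1) :=
      if_pos hi
    obtain ⟨J, hJ⟩ := exists_linearIsometry_le_range S (k := reducedWidth width L (i+1))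
      (by rw [hred]; exact le_min (by simpa using S.finrank_le) hS)
      (by simpa using reducedWidth_le width L (i+1))
    exact ⟨J, hJ, fun hL => absurd hi (by omega)⟩
  · have hred : reducedWidth width L (i+1) = width (i+1) := if_neg hi
    obtain ⟨J, hJ⟩ := exists_linearIsometryEquiv_eq_incl hred
    exact ⟨J.toLinearIsometry, fun s _ => ⟨J.symm s, J.apply_symm_apply s⟩, fun _ => hJ⟩

lemma exists_reducedWidth_layer (width : ℕ → ℕ) (L i : ℕ)
    (A : Euc (reducedWidth width L i) →ₗ[ℝ] Euc (width (i+1))) (c : Euc (width (i+1))) :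
    ∃ (J : Euc (reducedWidth width L (i+1)) →ₗᵢ[ℝ] Euc (width (i+1)))
      (M : Matrix (Fin (reducedWidth width L (i+1))) (Fin (reducedWidth width L i)) ℝ)
      (d : Euc (reducedWidth width L (i+1))),
      (∀ v, A v + c = J (mulVecE M v + d)) ∧
        (L ≤ i + 1 → ∀ v, J v = incl (reducedWidth width L (i+1)) (width (i+1)) v) := by
  obtain ⟨J, hJ, hJL⟩ := exists_linearIsometry_reducedWidth width L i _
    ((finrank_range_sup_span_singleton_le A c).trans (by simp))
  obtain ⟨B, d, hB⟩ := exists_eq_comp_add_of_le_range J.injective (le_sup_left.trans hJ)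
    (hJ (Submodule.mem_sup_right (Submodule.mem_span_singleton_self c)))
  exact ⟨J, Matrix.toEuclideanLin.symm B, d,
    fun v => by rw [mulVecE_eq_toEuclideanLin, LinearEquiv.apply_symm_apply]; exact hB v, hJL⟩

lemma feedforward_eq_of_intertwining {n n' : ℕ → ℕ}
    {W : ∀ i, Matrix (Fin (n (i+1))) (Fin (n i)) ℝ} {b : ∀ i, Euc (n (i+1))}
    {ρ : ∀ i, Euc (n (i+1)) → Euc (n (i+1))}
    {W' : ∀ i, Matrix (Fin (n' (i+1))) (Fin (n' i)) ℝ} {b' : ∀ i, Euc (n' (i+1))}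
    {ρ' : ∀ i, Euc (n' (i+1)) → Euc (n' (i+1))}
    (J : ∀ i, Euc (n' i) → Euc (n i))
    (hlayer : ∀ i v, mulVecE (W i) (J i v) + b i = J (i+1) (mulVecE (W' i) v + b' i))
    (hρ : ∀ i v, ρ i (J (i+1) v) = J (i+1) (ρ' i v))
    {x : Euc (n 0)} {x' : Euc (n' 0)} (hx : x = J 0 x') (i : ℕ) :
    feedforward n W b ρ i x = J i (feedforward n' W' b' ρ' i x') := by
  induction i with
  | zero => exact hx
  | succ i ih => simp only [feedforward, ih, hlayer, hρ]

/-- **model compression with shifts.** Let (W, b, t, h) be a radial neural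
network with shifts, with L layers, widths n₀, …, n_L and activations hᵢ^{(nᵢ, tᵢ)}.
Then there exist reduced weights and biases such that the compressed network with the
same shifts and activations hᵢ^{(nʳᵉᵈᵢ, tᵢ)} has the same feedforward function
(nʳᵉᵈ_L = n_L, and the identification of ℝ^{nʳᵉᵈ_L} with ℝ^{n_L} is the standard
inclusion). -/
theorem model_compression_with_shifts (L : ℕ) (width : ℕ → ℕ)
    (W : ∀ i : ℕ, Matrix (Fin (width (i+1))) (Fin (width i)) ℝ)
    (b : ∀ i : ℕ, Euc (width (i+1)))
    (t : ℕ → ℝ) (h : ℕ → ℝ → ℝ) :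
    ∃ (Wred : ∀ i : ℕ, Matrix (Fin (reducedWidth width L (i+1))) (Fin (reducedWidth width L i)) ℝ)
      (bred : ∀ i : ℕ, Euc (reducedWidth width L (i+1))),
      ∀ x : Euc (width 0),
        feedforward width W b (fun i => shiftedRadialRescale (h i) (t i)) L x
          = incl (reducedWidth width L L) (width L)
              (feedforward (reducedWidth width L) Wred bred
                (fun i => shiftedRadialRescale (h i) (t i)) L x) := by
  choose J' M d hlayer hlast using fun i (J : Euc (reducedWidth width L i) →ₗᵢ[ℝ] Euc (width i)) =>
    exists_reducedWidth_layer width L i (Matrix.toEuclideanLin (W i) ∘ₗ J.toLinearMap) (b i)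
  let J : ∀ i, Euc (reducedWidth width L i) →ₗᵢ[ℝ] Euc (width i) :=
    fun i => Nat.rec LinearIsometry.id (fun i Ji => J' i Ji) i
  refine ⟨fun i => M i (J i), fun i => d i (J i), fun x => ?_⟩
  refine (feedforward_eq_of_intertwining (fun i => J i)
    (fun i v => by rw [mulVecE_eq_toEuclideanLin]; exact hlayer i (J i) v)
    (fun i v => shiftedRadialRescale_linearIsometry (J (i+1)) _ _ v) (x' := x) rfl L).trans ?_
  cases L with
  | zero => exact (incl_self _ _).symm
  | succ i => exact hlast i (J i) le_rfl _

end
end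

section
/- Fix a widths vector n = (n₀, …, n_L), radial rescaling activations ρ_i = h_i^{(n_i)}, a finite batch of training data {(x_j, y_j)} ⊂ ℝ^{n₀} × ℝ^{n_L}, and a cost function C : ℝ^{n_L} × ℝ^{n_L} → ℝ. Let 𝓛 : Param(n) → ℝ be the loss function 𝓛(W, b) = Σ_j C(F_{(W,b,ρ)}(x_j), y_j), and assume 𝓛 is differentiable. Let γ be the gradient descent map on Param(n) with learning rate η > 0, γ(W, b) = (W, b) − η ∇_{(W,b)} 𝓛. Then for every Q ∈ O(n^hid) = O(n₁) × ⋯ × O(n_{L−1}), every (W, b) ∈ Param(n), and every k ≥ 0: γᵏ(Q·(W, b)) = Q·γᵏ(W, b). Equivalently, γᵏ(W, b) = Q · γᵏ(Q^{−1}·(W, b)). -/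
open scoped Classical
open Metric Set

noncomputable section

/-- The parameter space Param(n) of all weights and biases of a network with L layers,
as a Euclidean (inner product) space: for layer i+1 there is a matrix coordinate for
every pair (j, k) and a bias coordinate for every j. -/
abbrev ParamSpace (width : ℕ → ℕ) (L : ℕ) :=
  PiLp 2 (fun i : Fin L =>
    EuclideanSpace ℝ
      ((Fin (width ((i : ℕ) + 1)) × Fin (width (i : ℕ))) ⊕ Fin (width ((i : ℕ) + 1))))

/-- The weight matrices of a parameter vector (0 beyond layer L). -/
def weightsOf {width : ℕ → ℕ} {L : ℕ} (θ : ParamSpace width L) :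
    ∀ i : ℕ, Matrix (Fin (width (i+1))) (Fin (width i)) ℝ :=
  fun i => if hi : i < L then (fun j k => θ ⟨i, hi⟩ (Sum.inl (j, k))) else 0

/-- The bias vectors of a parameter vector (0 beyond layer L). -/
def biasesOf {width : ℕ → ℕ} {L : ℕ} (θ : ParamSpace width L) :
    ∀ i : ℕ, Euc (width (i+1)) :=
  fun i => if hi : i < L then WithLp.toLp 2 (fun j => θ ⟨i, hi⟩ (Sum.inr j)) else 0

/-- The loss function 𝓛(W, b) = ∑ⱼ C(F_{(W,b,ρ)}(xⱼ), yⱼ) on Param(n), for the batch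
of training data (xⱼ, yⱼ), cost function C, and radial rescaling activations
ρᵢ = hᵢ^{(nᵢ)}. -/
def lossOf (width : ℕ → ℕ) (L : ℕ) (h : ℕ → ℝ → ℝ) {J : ℕ}
    (x : Fin J → Euc (width 0)) (y : Fin J → Euc (width L))
    (C : Euc (width L) → Euc (width L) → ℝ)
    (θ : ParamSpace width L) : ℝ :=
  ∑ j, C (feedforward width (weightsOf θ) (biasesOf θ)
            (fun i => radialRescale (h i)) L (x j)) (y j)

/-- The change-of-basis action of a family of matrices Q on Param(n):
Wᵢ ↦ Qᵢ Wᵢ Qᵢ₋₁⁻¹ and bᵢ ↦ Qᵢ bᵢ. -/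
def actOn {width : ℕ → ℕ} {L : ℕ}
    (Q : ∀ i : ℕ, Matrix (Fin (width i)) (Fin (width i)) ℝ)
    (θ : ParamSpace width L) : ParamSpace width L :=
  WithLp.toLp 2 fun i => WithLp.toLp 2 fun s =>
    match s with
    | Sum.inl jk => (Q ((i : ℕ) + 1) * weightsOf θ (i : ℕ) * (Q (i : ℕ))⁻¹) jk.1 jk.2
    | Sum.inr j => mulVecE (Q ((i : ℕ) + 1)) (biasesOf θ (i : ℕ)) j

/-! The action of `O(nʰⁱᵈ)` is a linear isometry of `Param(n)`: on each layer it multiplies the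
weights by orthogonal matrices on both sides, which preserves the Frobenius inner product
`tr (W W'ᵀ)`, and the biases on the left. It leaves the loss invariant, because radial rescalings
commute with orthogonal maps, so that `Qᵢ` intertwines the `i`-th partial feedforward maps of
`Q · θ` and of `θ`, and `Q₀ = Q_L = 1`. The gradient of a function invariant under a linear
isometry is equivariant under it, hence so is a gradient descent step, and so are its iterates. -/

open scoped Matrix Gradient RealInnerProductSpace

theorem gradient_linearIsometryEquiv_apply_of_comp_eq {𝕜 E : Type*} [RCLike 𝕜]
    [NormedAddCommGroup E] [InnerProductSpace 𝕜 E] [CompleteSpace E]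
    {f : E → 𝕜} (A : E ≃ₗᵢ[𝕜] E) (hf : f ∘ A = f) (x : E) :
    ∇ f (A x) = A (∇ f x) := by
  have hfderiv : fderiv 𝕜 f x = (fderiv 𝕜 f (A x)).comp (A : E →L[𝕜] E) := by
    conv_lhs => rw [← hf]
    exact A.toContinuousLinearEquiv.comp_right_fderiv
  refine ext_inner_right 𝕜 fun w => ?_
  obtain ⟨v, rfl⟩ := A.surjective w
  rw [inner_gradient_left, A.inner_map_map, inner_gradient_left, hfderiv]
  rfl

theorem commute_sub_smul_gradient_of_comp_eq {E : Type*}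
    [NormedAddCommGroup E] [InnerProductSpace ℝ E] [CompleteSpace E]
    {f : E → ℝ} (A : E ≃ₗᵢ[ℝ] E) (hf : f ∘ A = f) (η : ℝ) :
    Function.Commute (fun x => x - η • ∇ f x) A := fun x => by
  simp only [gradient_linearIsometryEquiv_apply_of_comp_eq A hf, map_sub, map_smul]

theorem mulVecE_eq_toLp_mulVec {m n : ℕ} (W : Matrix (Fin m) (Fin n) ℝ) (v : Euc n) :
    mulVecE W v = WithLp.toLp 2 (W *ᵥ v.ofLp) := rfl

@[simp] theorem mulVecE_one {n : ℕ} (v : Euc n) : mulVecE 1 v = v := by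
  simp [mulVecE_eq_toLp_mulVec]

theorem mulVecE_mul {m n p : ℕ} (A : Matrix (Fin m) (Fin n) ℝ)
    (B : Matrix (Fin n) (Fin p) ℝ) (v : Euc p) :
    mulVecE (A * B) v = mulVecE A (mulVecE B v) := by
  simp [mulVecE_eq_toLp_mulVec, Matrix.mulVec_mulVec]

@[simp] theorem mulVecE_add {m n : ℕ} (A : Matrix (Fin m) (Fin n) ℝ) (u v : Euc n) :
    mulVecE A (u + v) = mulVecE A u + mulVecE A v := by
  simp [mulVecE_eq_toLp_mulVec, Matrix.mulVec_add]

@[simp] theorem mulVecE_smul {m n : ℕ} (A : Matrix (Fin m) (Fin n) ℝ) (c : ℝ) (v : Euc n) :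
    mulVecE A (c • v) = c • mulVecE A v := by
  simp [mulVecE_eq_toLp_mulVec, Matrix.mulVec_smul]

@[simp] theorem mulVecE_zero {m n : ℕ} (A : Matrix (Fin m) (Fin n) ℝ) :
    mulVecE A (0 : Euc n) = 0 := by
  simp [mulVecE_eq_toLp_mulVec]

theorem inner_mulVecE_mulVecE {n : ℕ} {Q : Matrix (Fin n) (Fin n) ℝ}
    (hQ : Q ∈ Matrix.orthogonalGroup (Fin n) ℝ) (u v : Euc n) :
    ⟪mulVecE Q u, mulVecE Q v⟫ = ⟪u, v⟫ := by
  have hQ' : Qᵀ * Q = 1 := (Matrix.mem_orthogonalGroup_iff' _ ℝ).mp hQ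
  simp only [mulVecE_eq_toLp_mulVec, EuclideanSpace.inner_eq_star_dotProduct]
  simp [Matrix.dotProduct_mulVec, ← Matrix.mulVec_transpose, Matrix.mulVec_mulVec, hQ']

theorem radialRescale_map {m n : ℕ} (h : ℝ → ℝ) (e : Euc n →ₗᵢ[ℝ] Euc m) (v : Euc n) :
    radialRescale h (e v) = e (radialRescale h v) := by
  by_cases hv : v = 0
  · simp [radialRescale, hv]
  · simp [radialRescale, hv, e.norm_map, map_eq_zero_iff e e.injective]

theorem feedforward_conj (width : ℕ → ℕ)
    (W : ∀ i : ℕ, Matrix (Fin (width (i+1))) (Fin (width i)) ℝ)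
    (b : ∀ i : ℕ, Euc (width (i+1)))
    (ρ : ∀ i : ℕ, Euc (width (i+1)) → Euc (width (i+1)))
    (Q : ∀ i : ℕ, Matrix (Fin (width i)) (Fin (width i)) ℝ)
    (hQ : ∀ i, (Q i)⁻¹ * Q i = 1)
    (hρ : ∀ i v, ρ i (mulVecE (Q (i+1)) v) = mulVecE (Q (i+1)) (ρ i v))
    (i : ℕ) (x : Euc (width 0)) :
    feedforward width (fun i => Q (i+1) * W i * (Q i)⁻¹) (fun i => mulVecE (Q (i+1)) (b i)) ρ
        i (mulVecE (Q 0) x)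
      = mulVecE (Q i) (feedforward width W b ρ i x) := by
  induction i with
  | zero => rfl
  | succ i ih =>
    change ρ i (mulVecE _ (feedforward _ _ _ ρ i (mulVecE (Q 0) x)) + _) = _
    rw [ih, ← mulVecE_mul, Matrix.mul_assoc, hQ, Matrix.mul_one, mulVecE_mul, ← mulVecE_add, hρ]
    rfl

namespace Matrix

theorem inv_eq_transpose_of_mem_orthogonalGroup {n : Type*} [Fintype n] [DecidableEq n]
    {Q : Matrix n n ℝ} (hQ : Q ∈ orthogonalGroup n ℝ) : Q⁻¹ = Qᵀ :=
  inv_eq_left_inv ((mem_orthogonalGroup_iff' n ℝ).mp hQ)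

theorem trace_mul_transpose_conj_orthogonal {m n : Type*} [Fintype m] [DecidableEq m]
    [Fintype n] [DecidableEq n] {P : Matrix m m ℝ} {R : Matrix n n ℝ}
    (hP : P ∈ orthogonalGroup m ℝ) (hR : R ∈ orthogonalGroup n ℝ)
    (A B : Matrix m n ℝ) :
    ((P * A * R⁻¹) * (P * B * R⁻¹)ᵀ).trace = (A * Bᵀ).trace := by
  have hP' : Pᵀ * P = 1 := (mem_orthogonalGroup_iff' m ℝ).mp hP
  have hR' : Rᵀ * R = 1 := (mem_orthogonalGroup_iff' n ℝ).mp hR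
  rw [inv_eq_transpose_of_mem_orthogonalGroup hR]
  calc ((P * A * Rᵀ) * (P * B * Rᵀ)ᵀ).trace = (P * (A * (Rᵀ * R) * Bᵀ * Pᵀ)).trace := by
        simp only [transpose_mul, transpose_transpose, Matrix.mul_assoc]
    _ = (A * (Rᵀ * R) * Bᵀ * (Pᵀ * P)).trace := by
        rw [trace_mul_comm]
        simp only [Matrix.mul_assoc]
    _ = (A * Bᵀ).trace := by rw [hP', hR', Matrix.mul_one, Matrix.mul_one]

end Matrix

section ParamSpace

variable {width : ℕ → ℕ} {L : ℕ}

@[simp] theorem weightsOf_add (θ ψ : ParamSpace width L) (i : ℕ) :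
    weightsOf (θ + ψ) i = weightsOf θ i + weightsOf ψ i := by
  by_cases hi : i < L
  · simp only [weightsOf, hi, ↓reduceDIte]
    rfl
  · simp [weightsOf, hi]

@[simp] theorem weightsOf_smul (c : ℝ) (θ : ParamSpace width L) (i : ℕ) :
    weightsOf (c • θ) i = c • weightsOf θ i := by
  by_cases hi : i < L
  · simp only [weightsOf, hi, ↓reduceDIte]
    rfl
  · simp [weightsOf, hi]

@[simp] theorem biasesOf_add (θ ψ : ParamSpace width L) (i : ℕ) :
    biasesOf (θ + ψ) i = biasesOf θ i + biasesOf ψ i := by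
  by_cases hi : i < L
  · simp only [biasesOf, hi, ↓reduceDIte]
    rfl
  · simp [biasesOf, hi]

@[simp] theorem biasesOf_smul (c : ℝ) (θ : ParamSpace width L) (i : ℕ) :
    biasesOf (c • θ) i = c • biasesOf θ i := by
  by_cases hi : i < L
  · simp only [biasesOf, hi, ↓reduceDIte]
    rfl
  · simp [biasesOf, hi]

@[simp] theorem weightsOf_apply_fin (θ : ParamSpace width L) (i : Fin L) (j k) :
    weightsOf θ i j k = θ i (Sum.inl (j, k)) := by
  simp [weightsOf]

@[simp] theorem biasesOf_apply_fin (θ : ParamSpace width L) (i : Fin L) (j) :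
    biasesOf θ i j = θ i (Sum.inr j) := by
  simp [biasesOf]

theorem ParamSpace.ext {θ ψ : ParamSpace width L} (hW : weightsOf θ = weightsOf ψ)
    (hb : biasesOf θ = biasesOf ψ) : θ = ψ := by
  ext i (⟨j, k⟩ | j)
  · simpa using congrFun (congrFun (congrFun hW i) j) k
  · simpa using congrFun (congrArg WithLp.ofLp (congrFun hb i)) j

theorem weightsOf_actOn (Q : ∀ i : ℕ, Matrix (Fin (width i)) (Fin (width i)) ℝ)
    (θ : ParamSpace width L) (i : ℕ) :
    weightsOf (actOn Q θ) i = Q (i+1) * weightsOf θ i * (Q i)⁻¹ := by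
  by_cases hi : i < L
  · ext j k; simp [weightsOf, hi, actOn]
  · simp [weightsOf, hi]

theorem biasesOf_actOn (Q : ∀ i : ℕ, Matrix (Fin (width i)) (Fin (width i)) ℝ)
    (θ : ParamSpace width L) (i : ℕ) :
    biasesOf (actOn Q θ) i = mulVecE (Q (i+1)) (biasesOf θ i) := by
  by_cases hi : i < L
  · ext j; simp [biasesOf, hi, actOn]
  · simp [biasesOf, hi]

theorem ParamSpace.inner_eq_sum (θ ψ : ParamSpace width L) :
    ⟪θ, ψ⟫ = ∑ i : Fin L,
      ((weightsOf θ i * (weightsOf ψ i)ᵀ).trace + ⟪biasesOf θ i, biasesOf ψ i⟫) := by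
  simp [PiLp.inner_apply, Fintype.sum_sum_type, Fintype.sum_prod_type, Matrix.trace,
    Matrix.mul_apply, mul_comm]

def actOnₗ (Q : ∀ i : ℕ, Matrix (Fin (width i)) (Fin (width i)) ℝ) :
    ParamSpace width L →ₗ[ℝ] ParamSpace width L where
  toFun := actOn Q
  map_add' θ ψ := ParamSpace.ext
    (funext fun i => by simp [weightsOf_actOn, Matrix.mul_add, Matrix.add_mul])
    (funext fun i => by simp [biasesOf_actOn])
  map_smul' c θ := ParamSpace.ext
    (funext fun i => by simp [weightsOf_actOn])
    (funext fun i => by simp [biasesOf_actOn])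

theorem inner_actOn_actOn {Q : ∀ i : ℕ, Matrix (Fin (width i)) (Fin (width i)) ℝ}
    (hQ : ∀ i, Q i ∈ Matrix.orthogonalGroup (Fin (width i)) ℝ) (θ ψ : ParamSpace width L) :
    ⟪actOn Q θ, actOn Q ψ⟫ = ⟪θ, ψ⟫ := by
  simp only [ParamSpace.inner_eq_sum, weightsOf_actOn, biasesOf_actOn,
    Matrix.trace_mul_transpose_conj_orthogonal (hQ _) (hQ _), inner_mulVecE_mulVecE (hQ _)]

def actOnLinearIsometryEquiv {Q : ∀ i : ℕ, Matrix (Fin (width i)) (Fin (width i)) ℝ}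
    (hQ : ∀ i, Q i ∈ Matrix.orthogonalGroup (Fin (width i)) ℝ) :
    ParamSpace width L ≃ₗᵢ[ℝ] ParamSpace width L :=
  ((actOnₗ Q).isometryOfInner (inner_actOn_actOn hQ)).toLinearIsometryEquiv rfl

theorem lossOf_actOn (h : ℕ → ℝ → ℝ) {J : ℕ}
    (x : Fin J → Euc (width 0)) (y : Fin J → Euc (width L))
    (C : Euc (width L) → Euc (width L) → ℝ)
    {Q : ∀ i : ℕ, Matrix (Fin (width i)) (Fin (width i)) ℝ}
    (hQ : ∀ i, Q i ∈ Matrix.orthogonalGroup (Fin (width i)) ℝ) (hQ0 : Q 0 = 1) (hQL : Q L = 1)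
    (θ : ParamSpace width L) :
    lossOf width L h x y C (actOn Q θ) = lossOf width L h x y C θ := by
  have hinv : ∀ i, (Q i)⁻¹ * Q i = 1 := fun i => by
    rw [Matrix.inv_eq_transpose_of_mem_orthogonalGroup (hQ i)]
    exact (Matrix.mem_orthogonalGroup_iff' _ ℝ).mp (hQ i)
  have hρ : ∀ i v, radialRescale (h i) (mulVecE (Q (i+1)) v)
      = mulVecE (Q (i+1)) (radialRescale (h i) v) := fun i =>
    radialRescale_map (h i)
      ((Matrix.toLpLin 2 2 (Q (i+1))).isometryOfInner (inner_mulVecE_mulVecE (hQ (i+1))))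
  refine Finset.sum_congr rfl fun j _ => ?_
  have hF := feedforward_conj width (weightsOf θ) (biasesOf θ) _ Q hinv hρ L (x j)
  rw [hQ0, hQL, mulVecE_one, mulVecE_one] at hF
  rw [funext (weightsOf_actOn Q θ), funext (biasesOf_actOn Q θ), hF]

end ParamSpace

theorem gradient_descent_comm_action_general (L : ℕ) (width : ℕ → ℕ) (h : ℕ → ℝ → ℝ)
    {J : ℕ} (x : Fin J → Euc (width 0)) (y : Fin J → Euc (width L))
    (C : Euc (width L) → Euc (width L) → ℝ)
    (η : ℝ)
    (Q : ∀ i : ℕ, Matrix (Fin (width i)) (Fin (width i)) ℝ)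
    (hQ : ∀ i, Q i ∈ Matrix.orthogonalGroup (Fin (width i)) ℝ)
    (hQ0 : Q 0 = 1) (hQL : Q L = 1)
    (θ : ParamSpace width L) (k : ℕ) :
    (fun ψ => ψ - η • gradient (lossOf width L h x y C) ψ)^[k] (actOn Q θ)
      = actOn Q ((fun ψ => ψ - η • gradient (lossOf width L h x y C) ψ)^[k] θ) := by
  let A : ParamSpace width L ≃ₗᵢ[ℝ] ParamSpace width L := actOnLinearIsometryEquiv hQ
  have hA : lossOf width L h x y C ∘ A = lossOf width L h x y C :=
    funext (lossOf_actOn h x y C hQ hQ0 hQL)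
  exact (commute_sub_smul_gradient_of_comp_eq A hA η).iterate_left k θ

/-- Gradient descent on Param(n) for the loss of a radial neural
network commutes with the change-of-basis action of O(nʰⁱᵈ) = O(n₁) × ⋯ × O(n_{L−1})
(families of orthogonal matrices Q with Q₀ = 1 and Q_L = 1):
γᵏ(Q·θ) = Q·γᵏ(θ) for all k ≥ 0. -/
theorem gradient_descent_comm_action (L : ℕ) (width : ℕ → ℕ) (h : ℕ → ℝ → ℝ)
    {J : ℕ} (x : Fin J → Euc (width 0)) (y : Fin J → Euc (width L))
    (C : Euc (width L) → Euc (width L) → ℝ)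
    (hdiff : Differentiable ℝ (lossOf width L h x y C))
    (η : ℝ) (hη : 0 < η)
    (Q : ∀ i : ℕ, Matrix (Fin (width i)) (Fin (width i)) ℝ)
    (hQ : ∀ i, Q i ∈ Matrix.orthogonalGroup (Fin (width i)) ℝ)
    (hQ0 : Q 0 = 1) (hQL : Q L = 1)
    (θ : ParamSpace width L) (k : ℕ) :
    (fun ψ => ψ - η • gradient (lossOf width L h x y C) ψ)^[k] (actOn Q θ)
      = actOn Q ((fun ψ => ψ - η • gradient (lossOf width L h x y C) ψ)^[k] θ) :=
  gradient_descent_comm_action_general L width h x y C η Q hQ hQ0 hQL θ k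

end
end
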